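/- Let a ∈ 𝒜, ξ ∈ ℝ, and let f : 𝕋 → ℂ be bounded measurable with ∫ a f = 0. If u is a periodic W^{2,1} function with −u'' + iξ a u = a f a.e., then ‖u'‖_{L²} ≤ [f]_a, and moreover ‖u − p‖_∞ ≤ [f]_a where p = ∫ u denotes the mean of u over [0,1]. -/

import Mathlib

/-!
Testing the equation against `conj u` and integrating by parts over one period gives the energy
identity `∫ |u'|² = Re ∫ a f conj u`, and since `∫ a f = 0` the right-hand side does not change
when `u` is replaced by `u - p`. The oscillation of `u` is at most `∫ |u'| ≤ ‖u'‖_{L²}`, and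
Cauchy–Schwarz for the probability density `a` bounds `∫ a |f| |u - p|` by `[f]_a ‖u'‖_{L²}`.
Hence `‖u'‖²_{L²} ≤ [f]_a ‖u'‖_{L²}`, which gives both estimates.
-/

open MeasureTheory Set Complex

noncomputable section

/-- `a ∈ 𝒜`: a measurable 1-periodic function (a function on the torus `𝕋`),
nonnegative a.e., integrable over one period, with `∫ a = 1`. -/
def MemA (a : ℝ → ℝ) : Prop :=
  Measurable a ∧ (∀ x, a (x + 1) = a x) ∧ (∀ᵐ x : ℝ, 0 ≤ a x) ∧
    IntegrableOn a (Ioc 0 1) ∧ (∫ x in Ioc (0:ℝ) 1, a x) = 1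

/-- A periodic `W^{2,1}` function: a 1-periodic continuously differentiable
`u : ℝ → ℂ` whose derivative is absolutely continuous with (periodic) second
derivative `u'' ∈ L¹(𝕋)`. -/
def IsPeriodicW21 (u u'' : ℝ → ℂ) : Prop :=
  (∀ x, u (x + 1) = u x) ∧ (∀ x, u'' (x + 1) = u'' x) ∧
  ContDiff ℝ 1 u ∧
  (∀ x, deriv u x = deriv u 0 + ∫ t in (0:ℝ)..x, u'' t) ∧
  IntegrableOn u'' (Ioc 0 1)

/-- The seminorm `[f]_a = (∫ a |f|²)^{1/2}`. -/
def seminormA (a : ℝ → ℝ) (f : ℝ → ℂ) : ℝ :=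
  Real.sqrt (∫ x in Ioc (0:ℝ) 1, a x * ‖f x‖ ^ 2)

open scoped Interval ComplexConjugate

namespace intervalIntegral

variable {𝕜 : Type*} [RCLike 𝕜] {a b : ℝ}

theorem integral_mul_primitive_eq_integral_tail_mul (hab : a ≤ b) {g k : ℝ → 𝕜}
    (hg : IntervalIntegrable g volume a b) (hk : IntervalIntegrable k volume a b) :
    ∫ x in a..b, g x * ∫ t in a..x, k t = ∫ t in a..b, (∫ x in t..b, g x) * k t := by
  rw [intervalIntegrable_iff_integrableOn_Ioc_of_le hab] at hg hk
  set F : ℝ → ℝ → 𝕜 := fun x t => if t < x then g x * k t else 0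
  have hF : Integrable (Function.uncurry F)
      ((volume.restrict (Ioc a b)).prod (volume.restrict (Ioc a b))) := by
    have hFi : Function.uncurry F =
        {p : ℝ × ℝ | p.2 < p.1}.indicator (fun p => g p.1 * k p.2) := by
      ext ⟨x, t⟩; simp [F, indicator_apply]
    rw [hFi]
    exact (hg.mul_prod hk).indicator (measurableSet_lt measurable_snd measurable_fst)
  have inner_t : ∀ x ∈ Ioc a b, ∫ t in Ioc a b, F x t = g x * ∫ t in a..x, k t := by
    intro x hx
    have hs : Ioc a b ∩ Iio x = Ioo a x := by
      ext t; simp only [mem_inter_iff, mem_Ioc, mem_Iio, mem_Ioo]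
      constructor
      · rintro ⟨⟨hat, -⟩, htx⟩; exact ⟨hat, htx⟩
      · rintro ⟨hat, htx⟩; exact ⟨⟨hat, htx.le.trans hx.2⟩, htx⟩
    rw [show (fun t => F x t) = (Iio x).indicator (fun t => g x * k t) by
        ext t; simp [F, indicator_apply],
      setIntegral_indicator measurableSet_Iio, hs, MeasureTheory.integral_const_mul,
      integral_of_le hx.1.le, integral_Ioc_eq_integral_Ioo]
  have inner_x : ∀ t ∈ Ioc a b, ∫ x in Ioc a b, F x t = (∫ x in t..b, g x) * k t := by
    intro t ht
    have hs : Ioc a b ∩ Ioi t = Ioc t b := by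
      rw [Ioc_inter_Ioi, sup_eq_right.mpr ht.1.le]
    rw [show (fun x => F x t) = (Ioi t).indicator (fun x => g x * k t) by
        ext x; simp [F, indicator_apply],
      setIntegral_indicator measurableSet_Ioi, hs, MeasureTheory.integral_mul_const,
      integral_of_le ht.2]
  rw [integral_of_le hab, integral_of_le hab, ← setIntegral_congr_fun measurableSet_Ioc inner_t,
    ← setIntegral_congr_fun measurableSet_Ioc inner_x, integral_integral_swap hF]

theorem continuousOn_of_integral_eq_sub {u u' : ℝ → 𝕜}
    (hu' : IntervalIntegrable u' volume a b)
    (hu : ∀ x ∈ [[a, b]], ∫ t in a..x, u' t = u x - u a) : ContinuousOn u [[a, b]] :=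
  ((continuousOn_primitive_interval' hu' left_mem_uIcc).add
      (continuousOn_const (c := u a))).congr
    fun x hx => (sub_add_cancel (u x) (u a)).symm.trans (by rw [← hu x hx]; rfl)

theorem integral_mul_deriv_eq_deriv_mul_of_integral_eq_sub (hab : a ≤ b) {u u' v v' : ℝ → 𝕜}
    (hu' : IntervalIntegrable u' volume a b) (hv' : IntervalIntegrable v' volume a b)
    (hu : ∀ x ∈ [[a, b]], ∫ t in a..x, u' t = u x - u a)
    (hv : ∀ x ∈ [[a, b]], ∫ t in a..x, v' t = v x - v a) :
    ∫ x in a..b, u x * v' x = u b * v b - u a * v a - ∫ x in a..b, u' x * v x := by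
  have hleft : ∫ x in a..b, u' x * ∫ t in a..x, v' t
      = (∫ x in a..b, u' x * v x) - (u b - u a) * v a := by
    rw [integral_congr (g := fun x => u' x * v x - u' x * v a) fun x hx => by
        simp only [hv x hx]; ring,
      integral_sub (hu'.mul_continuousOn (continuousOn_of_integral_eq_sub hv' hv))
        (hu'.mul_const _),
      integral_mul_const, hu b right_mem_uIcc]
  have hright : ∫ t in a..b, (∫ x in t..b, u' x) * v' t
      = u b * (v b - v a) - ∫ t in a..b, u t * v' t := by
    rw [integral_congr (g := fun t => u b * v' t - u t * v' t) fun t ht => by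
        simp only [← integral_interval_sub_left hu' (hu'.mono_set (uIcc_subset_uIcc_left ht)),
          hu b right_mem_uIcc, hu t ht]
        ring,
      integral_sub (hv'.const_mul _)
        (hv'.continuousOn_mul (continuousOn_of_integral_eq_sub hu' hu)),
      integral_const_mul, hv b right_mem_uIcc]
  have hswap := integral_mul_primitive_eq_integral_tail_mul hab hu' hv'
  rw [hleft, hright] at hswap
  linear_combination hswap

end intervalIntegral

theorem integral_mul_le_sqrt_integral_mul_sq {α : Type*} [MeasurableSpace α] {μ : Measure α}
    {w g : α → ℝ} (hw : 0 ≤ᵐ[μ] w) (hw_one : ∫ x, w x ∂μ = 1) (hw_int : Integrable w μ)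
    (hwg : Integrable (fun x => w x * g x) μ) (hwg2 : Integrable (fun x => w x * g x ^ 2) μ) :
    ∫ x, w x * g x ∂μ ≤ √(∫ x, w x * g x ^ 2 ∂μ) := by
  set c := ∫ x, w x * g x ∂μ
  have hvar : 0 ≤ ∫ x, w x * (g x - c) ^ 2 ∂μ :=
    integral_nonneg_of_ae (hw.mono fun x hx => mul_nonneg hx (sq_nonneg _))
  have hexpand : ∫ x, w x * (g x - c) ^ 2 ∂μ = (∫ x, w x * g x ^ 2 ∂μ) - c ^ 2 := by
    have hlin : Integrable (fun x => 2 * c * (w x * g x) - c ^ 2 * w x) μ :=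
      (hwg.const_mul _).sub (hw_int.const_mul _)
    rw [integral_congr_ae (g := fun x => w x * g x ^ 2 - (2 * c * (w x * g x) - c ^ 2 * w x))
        (ae_of_all _ fun x => by ring),
      integral_sub hwg2 hlin,
      integral_sub (hwg.const_mul _) (hw_int.const_mul _), integral_const_mul, integral_const_mul,
      hw_one]
    ring
  exact (le_abs_self c).trans (Real.abs_le_sqrt (by linarith))

theorem integral_le_sqrt_integral_sq {α : Type*} [MeasurableSpace α] {μ : Measure α}
    [IsProbabilityMeasure μ] {g : α → ℝ} (hg : Integrable g μ)
    (hg2 : Integrable (fun x => g x ^ 2) μ) : ∫ x, g x ∂μ ≤ √(∫ x, g x ^ 2 ∂μ) := by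
  simpa using integral_mul_le_sqrt_integral_mul_sq (w := fun _ => 1)
    (ae_of_all _ fun _ => zero_le_one) (by simp) (integrable_const 1) (by simpa using hg)
    (by simpa using hg2)

theorem integral_mul_sub_const_of_integral_eq_zero {α : Type*} [MeasurableSpace α]
    {μ : Measure α} {𝕜 : Type*} [RCLike 𝕜] {h g : α → 𝕜} (hh : Integrable h μ)
    (hhg : Integrable (fun x => h x * g x) μ) (hh_zero : ∫ x, h x ∂μ = 0) (c : 𝕜) :
    ∫ x, h x * (g x - c) ∂μ = ∫ x, h x * g x ∂μ := by
  simp only [mul_sub]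
  rw [integral_sub hhg (hh.mul_const c), integral_mul_const, hh_zero, zero_mul, sub_zero]

theorem norm_sub_le_setIntegral_norm_deriv {E : Type*} [NormedAddCommGroup E] [NormedSpace ℝ E]
    [CompleteSpace E] {u : ℝ → E} (hu : ContDiff ℝ 1 u) {a b x y : ℝ} (hx : x ∈ Icc a b)
    (hy : y ∈ Icc a b) : ‖u x - u y‖ ≤ ∫ t in Ioc a b, ‖deriv u t‖ := by
  have hu' : Continuous (deriv u) := hu.continuous_deriv le_rfl
  rw [← intervalIntegral.integral_deriv_eq_sub (fun t _ => hu.differentiable one_ne_zero t)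
      (hu'.intervalIntegrable y x), intervalIntegral.norm_integral_eq_norm_integral_uIoc]
  refine (norm_integral_le_integral_norm _).trans
    (setIntegral_mono_set hu'.norm.integrableOn_Ioc (ae_of_all _ fun t => norm_nonneg _)
      (Filter.Eventually.of_forall ?_))
  exact Ioc_subset_Ioc (le_min hy.1 hx.1) (max_le hy.2 hx.2)

theorem Function.Periodic.norm_sub_setIntegral_le {E : Type*} [NormedAddCommGroup E]
    [NormedSpace ℝ E] [CompleteSpace E] {u : ℝ → E} (hper : Function.Periodic u 1)
    (hu : ContDiff ℝ 1 u) (x : ℝ) :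
    ‖u x - ∫ y in Ioc (0:ℝ) 1, u y‖ ≤ ∫ y in Ioc (0:ℝ) 1, ‖deriv u y‖ := by
  have hfract : u (Int.fract x) = u x := by
    rw [Int.fract]
    simpa using hper.sub_int_mul_eq (x := x) ⌊x⌋
  have hx : Int.fract x ∈ Icc (0:ℝ) 1 := ⟨Int.fract_nonneg x, (Int.fract_lt_one x).le⟩
  have hvol : volume.real (Ioc (0:ℝ) 1) = 1 := by simp
  have hmean : u x - ∫ y in Ioc (0:ℝ) 1, u y = ∫ y in Ioc (0:ℝ) 1, (u x - u y) := by
    have hconst : IntegrableOn (fun _ => u x) (Ioc (0:ℝ) 1) := integrableOn_const (by simp)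
    rw [integral_sub hconst hu.continuous.integrableOn_Ioc,
      setIntegral_const, hvol, one_smul]
  rw [hmean, ← hfract]
  refine (norm_setIntegral_le_of_norm_le_const measure_Ioc_lt_top fun y hy =>
    norm_sub_le_setIntegral_norm_deriv hu hx (Ioc_subset_Icc_self hy)).trans_eq ?_
  rw [hvol, mul_one]

namespace IsPeriodicW21

variable {u u'' : ℝ → ℂ}

theorem integral_mul_conj_eq_neg_integral_norm_deriv_sq (hu : IsPeriodicW21 u u'') :
    ∫ x in Ioc (0:ℝ) 1, u'' x * conj (u x)
      = -((∫ x in Ioc (0:ℝ) 1, ‖deriv u x‖ ^ 2 : ℝ) : ℂ) := by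
  obtain ⟨hper, -, hC1, hftc, hu''⟩ := hu
  have hu' : Continuous (deriv u) := hC1.continuous_deriv le_rfl
  have hFTC : ∀ x y, ∫ t in x..y, deriv u t = u y - u x := fun x y =>
    intervalIntegral.integral_deriv_eq_sub (fun t _ => hC1.differentiable one_ne_zero t)
      (hu'.intervalIntegrable x y)
  have hper' : deriv u 1 = deriv u 0 := by
    simpa [hper] using (deriv_comp_add_const u 1 0).symm
  have hibp := intervalIntegral.integral_mul_deriv_eq_deriv_mul_of_integral_eq_sub zero_le_one
    (u := deriv u) (v := fun x => conj (u x)) (v' := fun x => conj (deriv u x))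
    ((intervalIntegrable_iff_integrableOn_Ioc_of_le zero_le_one).2 hu'')
    ((Complex.continuous_conj.comp hu').intervalIntegrable 0 1)
    (fun x _ => by rw [hftc x]; ring)
    (fun x hx => by
      have hx0 : (0:ℝ) ≤ x := by simpa using hx.1
      rw [intervalIntegral.integral_of_le hx0, integral_conj,
        ← intervalIntegral.integral_of_le hx0, hFTC, map_sub])
  have hu1 : u 1 = u 0 := by simpa using hper 0
  simp only [intervalIntegral.integral_of_le zero_le_one, hper', hu1, sub_self, zero_sub,
    Complex.mul_conj', ← Complex.ofReal_pow] at hibp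
  rw [← integral_complex_ofReal, hibp, neg_neg]

theorem integral_norm_deriv_sq_eq_re_integral (hu : IsPeriodicW21 u u'') {a : ℝ → ℝ}
    (ha : IntegrableOn a (Ioc 0 1)) {f : ℝ → ℂ} {ξ : ℝ}
    (heq : ∀ᵐ x : ℝ, -u'' x + (ξ : ℂ) * Complex.I * (a x : ℂ) * u x = (a x : ℂ) * f x) :
    ∫ x in Ioc (0:ℝ) 1, ‖deriv u x‖ ^ 2
      = (∫ x in Ioc (0:ℝ) 1, (a x : ℂ) * f x * conj (u x)).re := by
  have hū : ContinuousOn (fun x => conj (u x)) (Icc 0 1) :=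
    (Complex.continuous_conj.comp hu.2.2.1.continuous).continuousOn
  have hu''ū : IntegrableOn (fun x => u'' x * conj (u x)) (Ioc 0 1) :=
    hu.2.2.2.2.mul_continuousOn_of_subset hū measurableSet_Ioc isCompact_Icc
      Ioc_subset_Icc_self
  have haū : IntegrableOn (fun x => ((a x * ‖u x‖ ^ 2 : ℝ) : ℂ)) (Ioc 0 1) :=
    (ha.mul_continuousOn_of_subset (hu.2.2.1.continuous.norm.pow 2).continuousOn
      measurableSet_Ioc isCompact_Icc Ioc_subset_Icc_self).ofReal
  have htested : ∫ x in Ioc (0:ℝ) 1, (a x : ℂ) * f x * conj (u x)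
      = ξ * Complex.I * ((∫ x in Ioc (0:ℝ) 1, a x * ‖u x‖ ^ 2 : ℝ) : ℂ)
        - ∫ x in Ioc (0:ℝ) 1, u'' x * conj (u x) := by
    rw [← integral_complex_ofReal, ← integral_const_mul,
      ← integral_sub (haū.const_mul _) hu''ū]
    refine integral_congr_ae ((ae_restrict_of_ae heq).mono fun x hx => ?_)
    simp only [← hx]
    push_cast
    linear_combination (ξ * Complex.I * a x) * Complex.mul_conj' (u x)
  rw [htested, hu.integral_mul_conj_eq_neg_integral_norm_deriv_sq]
  simp

end IsPeriodicW21

theorem norm_integral_mul_le_seminormA_mul {a : ℝ → ℝ} (ha_nonneg : ∀ᵐ x : ℝ, 0 ≤ a x)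
    (ha_int : IntegrableOn a (Ioc 0 1)) (ha_one : ∫ x in Ioc (0:ℝ) 1, a x = 1) {f g : ℝ → ℂ}
    (hf : Measurable f) {M : ℝ} (hM : ∀ x, ‖f x‖ ≤ M) {L : ℝ} (hL : ∀ x, ‖g x‖ ≤ L) :
    ‖∫ x in Ioc (0:ℝ) 1, (a x : ℂ) * f x * g x‖ ≤ seminormA a f * L := by
  have haf : IntegrableOn (fun x => a x * ‖f x‖) (Ioc 0 1) :=
    ha_int.mul_bdd hf.norm.aestronglyMeasurable (ae_of_all _ fun x => by simpa using hM x)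
  have haf2 : IntegrableOn (fun x => a x * ‖f x‖ ^ 2) (Ioc 0 1) :=
    ha_int.mul_bdd (hf.norm.pow_const 2).aestronglyMeasurable (ae_of_all _ fun x => by
      simpa using pow_le_pow_left₀ (norm_nonneg _) (hM x) 2)
  calc ‖∫ x in Ioc (0:ℝ) 1, (a x : ℂ) * f x * g x‖
      ≤ ∫ x in Ioc (0:ℝ) 1, a x * ‖f x‖ * L := by
        refine norm_integral_le_of_norm_le (haf.mul_const L) ?_
        filter_upwards [ae_restrict_of_ae ha_nonneg] with x hx
        rw [norm_mul, norm_mul, Complex.norm_real, Real.norm_of_nonneg hx]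
        exact mul_le_mul_of_nonneg_left (hL x) (by positivity)
    _ = (∫ x in Ioc (0:ℝ) 1, a x * ‖f x‖) * L := integral_mul_const _ _
    _ ≤ seminormA a f * L := by
        gcongr
        · exact (norm_nonneg _).trans (hL 0)
        · exact integral_mul_le_sqrt_integral_mul_sq (ae_restrict_of_ae ha_nonneg) ha_one ha_int
            haf haf2

theorem statement_9_general (a : ℝ → ℝ) (ha : MemA a) (ξ : ℝ)
    (f : ℝ → ℂ) (hf_meas : Measurable f)
    (hf_bdd : ∃ M, ∀ x, ‖f x‖ ≤ M)
    (hf_mean : (∫ x in Ioc (0:ℝ) 1, (a x : ℂ) * f x) = 0)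
    (u u'' : ℝ → ℂ) (hu : IsPeriodicW21 u u'')
    (heq : ∀ᵐ x : ℝ,
      -u'' x + (ξ : ℂ) * Complex.I * (a x : ℂ) * u x = (a x : ℂ) * f x) :
    Real.sqrt (∫ x in Ioc (0:ℝ) 1, ‖deriv u x‖ ^ 2) ≤ seminormA a f ∧
    ∀ x, ‖u x - ∫ y in Ioc (0:ℝ) 1, u y‖ ≤ seminormA a f := by
  obtain ⟨-, -, ha_nonneg, ha_int, ha_one⟩ := ha
  obtain ⟨M, hM⟩ := hf_bdd
  have hC1 : ContDiff ℝ 1 u := hu.2.2.1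
  set p := ∫ y in Ioc (0:ℝ) 1, u y
  set E := ∫ x in Ioc (0:ℝ) 1, ‖deriv u x‖ ^ 2
  have hu' : Continuous (deriv u) := hC1.continuous_deriv le_rfl
  have hosc : ∀ x, ‖u x - p‖ ≤ √E := fun x =>
    haveI : IsProbabilityMeasure (volume.restrict (Ioc (0:ℝ) 1)) := ⟨by simp⟩
    (Function.Periodic.norm_sub_setIntegral_le hu.1 hC1 x).trans
      (integral_le_sqrt_integral_sq hu'.norm.integrableOn_Ioc (hu'.norm.pow 2).integrableOn_Ioc)
  have haf : IntegrableOn (fun x => (a x : ℂ) * f x) (Ioc 0 1) :=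
    ha_int.ofReal.mul_bdd hf_meas.aestronglyMeasurable (ae_of_all _ hM)
  have hafū : IntegrableOn (fun x => (a x : ℂ) * f x * conj (u x)) (Ioc 0 1) :=
    haf.mul_continuousOn_of_subset (Complex.continuous_conj.comp hC1.continuous).continuousOn
      measurableSet_Ioc isCompact_Icc Ioc_subset_Icc_self
  have hEK : E ≤ √E * seminormA a f := calc
    E = (∫ x in Ioc (0:ℝ) 1, (a x : ℂ) * f x * conj (u x)).re :=
      hu.integral_norm_deriv_sq_eq_re_integral ha_int heq
    _ = (∫ x in Ioc (0:ℝ) 1, (a x : ℂ) * f x * (conj (u x) - conj p)).re := by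
      rw [integral_mul_sub_const_of_integral_eq_zero haf hafū hf_mean]
    _ ≤ seminormA a f * √E := (re_le_norm _).trans
      (norm_integral_mul_le_seminormA_mul ha_nonneg ha_int ha_one hf_meas hM fun x => by
        rw [← map_sub, Complex.norm_conj]; exact hosc x)
    _ = √E * seminormA a f := mul_comm _ _
  have hsqrt : √E ≤ seminormA a f := by
    have hE : √E ^ 2 = E := Real.sq_sqrt (integral_nonneg fun x => by positivity)
    have hK : 0 ≤ seminormA a f := Real.sqrt_nonneg _
    nlinarith [Real.sqrt_nonneg E]
  exact ⟨hsqrt, fun x => (hosc x).trans hsqrt⟩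

/-- for `a ∈ 𝒜`, `ξ ∈ ℝ` and `f : 𝕋 → ℂ` bounded measurable with
`∫ a f = 0`, any periodic `W^{2,1}` solution of `-u'' + iξ a u = a f` satisfies
`‖u'‖_{L²} ≤ [f]_a` and `‖u - p‖_∞ ≤ [f]_a`, where `p = ∫ u` is the mean of `u`
over `[0,1]`.  (The sup-norm bound is expressed pointwise.) -/
theorem statement_9 (a : ℝ → ℝ) (ha : MemA a) (ξ : ℝ)
    (f : ℝ → ℂ) (hf_per : ∀ x, f (x + 1) = f x) (hf_meas : Measurable f)
    (hf_bdd : ∃ M, ∀ x, ‖f x‖ ≤ M)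
    (hf_mean : (∫ x in Ioc (0:ℝ) 1, (a x : ℂ) * f x) = 0)
    (u u'' : ℝ → ℂ) (hu : IsPeriodicW21 u u'')
    (heq : ∀ᵐ x : ℝ,
      -u'' x + (ξ : ℂ) * Complex.I * (a x : ℂ) * u x = (a x : ℂ) * f x) :
    Real.sqrt (∫ x in Ioc (0:ℝ) 1, ‖deriv u x‖ ^ 2) ≤ seminormA a f ∧
    ∀ x, ‖u x - ∫ y in Ioc (0:ℝ) 1, u y‖ ≤ seminormA a f :=
  statement_9_general a ha ξ f hf_meas hf_bdd hf_mean u u'' hu heq
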